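/- arXiv:2212.04099 — 7 statements merged into one kernel-verified Lean document; each statement's English description precedes it below -/
import Mathlib

section
/- For all ζ with 0 < ζ < π/2, one has ζ - sin ζ ≤ (π/2 - 1)·sin³ζ. -/
set_option maxHeartbeats 800000

open Real

theorem stmt_0 (ζ : ℝ) (h0 : 0 < ζ) (h1 : ζ < Real.pi / 2) :
    ζ - Real.sin ζ ≤ (Real.pi / 2 - 1) * (Real.sin ζ) ^ 3 := by
  have hpi := Real.pi_gt_three
  set a : ℝ := 3 * (π / 2 - 1) with ha
  have hapos : 0 < a := by rw [ha]; nlinarith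
  set s : ℝ := Real.sqrt (a ^ 2 + 4 * a) with hs
  have hs2 : s ^ 2 = a ^ 2 + 4 * a := Real.sq_sqrt (by nlinarith)
  have hs_pos : 0 < s := Real.sqrt_pos.mpr (by nlinarith)
  have hsa : a ≤ s := by nlinarith
  have hs3a : s ≤ 3 * a := by nlinarith
  set c0 : ℝ := (s - a) / (2 * a) with hc0def
  have hc0_nonneg : 0 ≤ c0 := div_nonneg (by linarith) (by linarith)
  have hc0_le : c0 ≤ 1 := by rw [hc0def, div_le_one (by linarith)]; linarith
  have hroot : a * c0 ^ 2 + a * c0 - 1 = 0 := by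
    rw [hc0def]
    field_simp
    nlinarith [hs2]
  set ζ₁ : ℝ := Real.arccos c0 with hz1
  have hcz1 : Real.cos ζ₁ = c0 := Real.cos_arccos (by linarith) hc0_le
  have hz1_nonneg : 0 ≤ ζ₁ := Real.arccos_nonneg c0
  have hz1_le : ζ₁ ≤ π / 2 := by
    rw [hz1, Real.arccos_le_pi_div_two]; exact hc0_nonneg
  set f : ℝ → ℝ := fun x => (π / 2 - 1) * Real.sin x ^ 3 + Real.sin x - x with hf
  have hderiv : ∀ x : ℝ, HasDerivAt f
      ((1 - Real.cos x) * (a * Real.cos x ^ 2 + a * Real.cos x - 1)) x := by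
    intro x
    have h := ((((Real.hasDerivAt_sin x).pow 3).const_mul (π / 2 - 1)).add
      (Real.hasDerivAt_sin x)).sub (hasDerivAt_id x)
    convert h using 1
    · rfl
    · rfl
    · rfl
    have hsc := Real.sin_sq_add_cos_sq x
    push_cast
    rw [ha]
    ring_nf
    linear_combination (-(3 * (π / 2 - 1) * Real.cos x)) * hsc
  have hdiff : Differentiable ℝ f := fun x => (hderiv x).differentiableAt
  have hderiv_eq : ∀ x : ℝ, deriv f x =
      (1 - Real.cos x) * (a * Real.cos x ^ 2 + a * Real.cos x - 1) :=
    fun x => (hderiv x).deriv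
  -- monotone on [0, ζ₁]
  have hmono : MonotoneOn f (Set.Icc 0 ζ₁) := by
    apply monotoneOn_of_deriv_nonneg (convex_Icc _ _) hdiff.continuous.continuousOn
      (fun x _ => (hdiff x).differentiableWithinAt)
    intro x hx
    rw [interior_Icc] at hx
    rw [hderiv_eq]
    have hx0 : 0 < x := hx.1
    have hx1 : x < ζ₁ := hx.2
    have hcx : Real.cos x ≤ 1 := Real.cos_le_one x
    have hcge : c0 ≤ Real.cos x := by
      rw [← hcz1]
      exact Real.cos_le_cos_of_nonneg_of_le_pi hx0.le (by linarith [Real.pi_pos]) hx1.le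
    have h3 : 0 ≤ Real.cos x + c0 + 1 := by linarith
    have h4 := mul_nonneg hapos.le (mul_nonneg (sub_nonneg.2 hcge) h3)
    have : 0 ≤ a * Real.cos x ^ 2 + a * Real.cos x - 1 := by nlinarith [hroot, h4]
    nlinarith
  -- antitone on [ζ₁, π/2]
  have hanti : AntitoneOn f (Set.Icc ζ₁ (π / 2)) := by
    apply antitoneOn_of_deriv_nonpos (convex_Icc _ _) hdiff.continuous.continuousOn
      (fun x _ => (hdiff x).differentiableWithinAt)
    intro x hx
    rw [interior_Icc] at hx
    rw [hderiv_eq]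
    have hx0 : ζ₁ < x := hx.1
    have hx1 : x < π / 2 := hx.2
    have hcx1 : Real.cos x ≤ 1 := Real.cos_le_one x
    have hcx0 : 0 ≤ Real.cos x :=
      Real.cos_nonneg_of_mem_Icc ⟨by linarith, hx1.le⟩
    have hcle : Real.cos x ≤ c0 := by
      rw [← hcz1]
      exact Real.cos_le_cos_of_nonneg_of_le_pi hz1_nonneg (by linarith [Real.pi_pos]) hx0.le
    have h3 : 0 ≤ Real.cos x + c0 + 1 := by linarith
    have h4 := mul_nonneg hapos.le (mul_nonneg (sub_nonneg.2 hcle) h3)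
    have : a * Real.cos x ^ 2 + a * Real.cos x - 1 ≤ 0 := by nlinarith [hroot, h4]
    nlinarith
  have hf0 : f 0 = 0 := by simp [hf]
  have hfpi : f (π / 2) = 0 := by
    show (π / 2 - 1) * Real.sin (π / 2) ^ 3 + Real.sin (π / 2) - π / 2 = 0
    rw [Real.sin_pi_div_two]; ring
  have key : 0 ≤ f ζ := by
    rcases le_total ζ ζ₁ with hle | hle
    · have := hmono (Set.mem_Icc.mpr ⟨le_refl 0, hz1_nonneg⟩)
        (Set.mem_Icc.mpr ⟨h0.le, hle⟩) h0.le
      rwa [hf0] at this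
    · have := hanti (Set.mem_Icc.mpr ⟨hle, h1.le⟩)
        (Set.mem_Icc.mpr ⟨hz1_le, le_refl (π / 2)⟩) h1.le
      rw [hfpi] at this
      -- this : f (π/2) ≤ f ζ ... check direction
      exact this
  have key' : 0 ≤ (π / 2 - 1) * Real.sin ζ ^ 3 + Real.sin ζ - ζ := key
  nlinarith [key']
end

section
/- Let g : [-1,1] → ℝ be nonnegative, integrable, with ∫_{-1}^{1} g = 1 and ∫_{-1}^{1} x g(x) dx = 0. Set a = ∫_{-1}^{1} (1-x²)g, a₊ = ∫_{0}^{1} (1-x²)g, and A = ∫_{0}^{1} x²(1-x²)g. Then A ≤ a₊ - 2a₊²/(a + 1). -/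
open MeasureTheory

theorem stmt_7 (g : ℝ → ℝ) (hg : ∀ x ∈ Set.Icc (-1:ℝ) 1, 0 ≤ g x)
    (hgi : IntervalIntegrable g volume (-1) 1)
    (hmass : ∫ x in (-1:ℝ)..1, g x = 1)
    (hmean : ∫ x in (-1:ℝ)..1, x * g x = 0)
    (a aplus A : ℝ)
    (ha : a = ∫ x in (-1:ℝ)..1, (1 - x^2) * g x)
    (haplus : aplus = ∫ x in (0:ℝ)..1, (1 - x^2) * g x)
    (hA : A = ∫ x in (0:ℝ)..1, x^2 * (1 - x^2) * g x) :
    A ≤ aplus - 2 * aplus^2 / (a + 1) := by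
  have h01 : Set.uIcc (0:ℝ) 1 ⊆ Set.uIcc (-1:ℝ) 1 := by
    rw [Set.uIcc_subset_uIcc_iff_mem]
    constructor <;> · rw [Set.mem_uIcc]; norm_num
  have hneg : Set.uIcc (-1:ℝ) 0 ⊆ Set.uIcc (-1:ℝ) 1 := by
    rw [Set.uIcc_subset_uIcc_iff_mem]
    constructor <;> · rw [Set.mem_uIcc]; norm_num
  have hgi01 : IntervalIntegrable g volume 0 1 := hgi.mono_set h01
  have hgineg : IntervalIntegrable g volume (-1) 0 := hgi.mono_set hneg
  -- integrability of polynomial * g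
  have poly : ∀ (p : ℝ → ℝ), Continuous p → ∀ (c d : ℝ),
      IntervalIntegrable g volume c d → IntervalIntegrable (fun x => p x * g x) volume c d := by
    intro p hp c d hcd
    exact hcd.continuousOn_mul hp.continuousOn
  have i1 : IntervalIntegrable (fun x => (1 - x^2) * g x) volume (-1) 1 :=
    poly _ (by fun_prop) _ _ hgi
  have i1p : IntervalIntegrable (fun x => (1 - x^2) * g x) volume 0 1 :=
    poly _ (by fun_prop) _ _ hgi01
  have i1n : IntervalIntegrable (fun x => (1 - x^2) * g x) volume (-1) 0 :=
    poly _ (by fun_prop) _ _ hgineg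
  have ix : IntervalIntegrable (fun x => x * g x) volume (-1) 1 :=
    poly _ (by fun_prop) _ _ hgi
  have ixp : IntervalIntegrable (fun x => x * g x) volume 0 1 :=
    poly _ (by fun_prop) _ _ hgi01
  have ixn : IntervalIntegrable (fun x => x * g x) volume (-1) 0 :=
    poly _ (by fun_prop) _ _ hgineg
  have ix2p : IntervalIntegrable (fun x => x^2 * g x) volume 0 1 :=
    poly _ (by fun_prop) _ _ hgi01
  have iBp : IntervalIntegrable (fun x => (1 - x^2)^2 * g x) volume 0 1 :=
    poly _ (by fun_prop) _ _ hgi01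
  set m := ∫ x in (0:ℝ)..1, g x with hm
  set mn := ∫ x in (-1:ℝ)..0, g x with hmn
  set B := ∫ x in (0:ℝ)..1, (1 - x^2)^2 * g x with hB
  -- mass split
  have hsplit : mn + m = 1 := by
    rw [hm, hmn, intervalIntegral.integral_add_adjacent_intervals hgineg hgi01, hmass]
  -- mean split
  have hmean_split : (∫ x in (-1:ℝ)..0, x * g x) + ∫ x in (0:ℝ)..1, x * g x = 0 := by
    rw [intervalIntegral.integral_add_adjacent_intervals ixn ixp, hmean]
  -- a split
  have ha_split : (∫ x in (-1:ℝ)..0, (1 - x^2) * g x) + aplus = a := by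
    rw [haplus, ha, intervalIntegral.integral_add_adjacent_intervals i1n i1p]
  have hgpos : ∀ x ∈ Set.Icc (0:ℝ) 1, 0 ≤ g x := by
    intro x hx; exact hg x ⟨by linarith [hx.1], hx.2⟩
  have hgneg : ∀ x ∈ Set.Icc (-1:ℝ) 0, 0 ≤ g x := by
    intro x hx; exact hg x ⟨hx.1, by linarith [hx.2]⟩
  -- nonnegativity facts
  have han : 0 ≤ ∫ x in (-1:ℝ)..0, (1 - x^2) * g x := by
    apply intervalIntegral.integral_nonneg (by norm_num)
    intro x hx
    have := hgneg x hx
    have h1 : (0:ℝ) ≤ 1 + x := by linarith [hx.1]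
    have h2 : (0:ℝ) ≤ 1 - x := by linarith [hx.2]
    nlinarith [mul_nonneg (mul_nonneg h1 h2) this]
  have hap : 0 ≤ aplus := by
    rw [haplus]
    apply intervalIntegral.integral_nonneg (by norm_num)
    intro x hx
    have := hgpos x hx
    have h1 : (0:ℝ) ≤ 1 + x := by linarith [hx.1]
    have h2 : (0:ℝ) ≤ 1 - x := by linarith [hx.2]
    nlinarith [mul_nonneg (mul_nonneg h1 h2) this]
  have hm0 : 0 ≤ m := by
    apply intervalIntegral.integral_nonneg (by norm_num)
    intro x hx; exact hgpos x hx
  have hale : aplus ≤ a := by linarith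
  have hs : (0:ℝ) < a + 1 := by linarith
  -- ∫₀¹ x² g ≤ ∫₀¹ x g
  have c1 : (∫ x in (0:ℝ)..1, x^2 * g x) ≤ ∫ x in (0:ℝ)..1, x * g x := by
    apply intervalIntegral.integral_mono_on (by norm_num) ix2p ixp
    intro x hx
    have := hgpos x hx
    have h2 : (0:ℝ) ≤ 1 - x := by linarith [hx.2]
    nlinarith [mul_nonneg (mul_nonneg hx.1 h2) this]
  -- ∫₋₁⁰ x g ≥ -∫₋₁⁰ g, i.e. - ∫ x g ≤ mn
  have c2 : -(∫ x in (-1:ℝ)..0, x * g x) ≤ mn := by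
    have : (∫ x in (-1:ℝ)..0, (-x) * g x) ≤ ∫ x in (-1:ℝ)..0, g x := by
      apply intervalIntegral.integral_mono_on (by norm_num)
        (poly _ (by fun_prop) _ _ hgineg) hgineg
      intro x hx
      have := hgneg x hx
      have h1 : (0:ℝ) ≤ 1 + x := by linarith [hx.1]
      have h2 : (0:ℝ) ≤ -x := by linarith [hx.2]
      nlinarith [mul_nonneg h1 this, mul_nonneg h2 this]
    have hneg' : (∫ x in (-1:ℝ)..0, (-x) * g x) = -(∫ x in (-1:ℝ)..0, x * g x) := by
      rw [← intervalIntegral.integral_neg]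
      congr 1; funext x; ring
    rw [hneg'] at this
    exact this
  -- m decomposition: m = aplus + ∫ x² g
  have hmdec : m = aplus + ∫ x in (0:ℝ)..1, x^2 * g x := by
    rw [haplus, ← intervalIntegral.integral_add i1p ix2p, hm]
    apply intervalIntegral.integral_congr
    intro x _; ring
  -- 2 m ≤ a + 1
  have hm2 : 2 * m ≤ a + 1 := by
    linarith [c1, c2, hsplit, hmdec, hale, hmean_split]
  -- aplus - A = B
  have hAB : aplus - A = B := by
    rw [haplus, hA, hB, ← intervalIntegral.integral_sub i1p (poly _ (by fun_prop) _ _ hgi01)]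
    congr 1; funext x; ring
  -- Cauchy-Schwarz quadratic
  set t : ℝ := 2 * aplus / (a + 1) with htdef
  have key : 0 ≤ B - 2 * t * aplus + t^2 * m := by
    have h0 : 0 ≤ ∫ x in (0:ℝ)..1, ((1 - x^2) - t)^2 * g x := by
      apply intervalIntegral.integral_nonneg (by norm_num)
      intro x hx
      exact mul_nonneg (sq_nonneg _) (hgpos x hx)
    have heq : (∫ x in (0:ℝ)..1, ((1 - x^2) - t)^2 * g x)
        = B - 2 * t * aplus + t^2 * m := by
      have : (fun x => ((1 - x^2) - t)^2 * g x)
          = fun x => ((1 - x^2)^2 * g x - (2*t) * ((1 - x^2) * g x)) + t^2 * g x := by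
        funext x; ring
      rw [this, intervalIntegral.integral_add
        ((iBp.sub (i1p.const_mul (2*t)))) (hgi01.const_mul (t^2)),
        intervalIntegral.integral_sub iBp (i1p.const_mul (2*t)),
        intervalIntegral.integral_const_mul, intervalIntegral.integral_const_mul,
        ← hB, ← haplus, ← hm]
    rw [heq] at h0
    exact h0
  have ht : t * (a + 1) = 2 * aplus := by
    rw [htdef]; field_simp
  have ht2 : (t * (a + 1))^2 = 4 * aplus^2 := by rw [ht]; ring
  -- conclude: 2 aplus^2 / (a+1) ≤ B
  have hfinal : 2 * aplus^2 / (a + 1) ≤ B := by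
    rw [div_le_iff₀ hs]
    have hkey' : 2 * t * aplus ≤ B + t^2 * ((a+1)/2) := by
      have h1 : t^2 * (2 * m) ≤ t^2 * (a + 1) :=
        mul_le_mul_of_nonneg_left hm2 (sq_nonneg t)
      linarith [key, h1]
    have hprod := mul_le_mul_of_nonneg_right hkey' hs.le
    have e1 : 2 * t * aplus * (a+1) = 4 * aplus^2 := by
      rw [htdef]; field_simp; ring
    have e2 : t^2 * ((a+1)/2) * (a+1) = 2 * aplus^2 := by
      have h : t^2 * ((a+1)/2) * (a+1) = (t * (a+1))^2 / 2 := by ring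
      rw [h, ht2]; ring
    linarith [hprod, e1, e2]
  linarith [hAB, hfinal]
end

section
/- Let g : [-1,1] → ℝ be nonnegative, integrable, with ∫_{-1}^{1} g = 1 and ∫_{-1}^{1} x g(x) dx = 0. Set a = ∫_{-1}^{1} (1-x²)g, a₊ = ∫_{0}^{1} (1-x²)g. Then (∫_{0}^{1} x(1-x²)g(x) dx)² ≤ a₊² - 2a₊³/(a + 1). -/
open MeasureTheory

set_option maxHeartbeats 1000000 in
theorem stmt_8 (g : ℝ → ℝ) (hg : ∀ x ∈ Set.Icc (-1:ℝ) 1, 0 ≤ g x)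
    (hgi : IntervalIntegrable g volume (-1) 1)
    (hmass : ∫ x in (-1:ℝ)..1, g x = 1)
    (hmean : ∫ x in (-1:ℝ)..1, x * g x = 0)
    (a aplus : ℝ)
    (ha : a = ∫ x in (-1:ℝ)..1, (1 - x^2) * g x)
    (haplus : aplus = ∫ x in (0:ℝ)..1, (1 - x^2) * g x) :
    (∫ x in (0:ℝ)..1, x * (1 - x^2) * g x)^2 ≤ aplus^2 - 2 * aplus^3 / (a + 1) := by
  -- subinterval integrability of g
  have h01 : Set.uIcc (0:ℝ) 1 ⊆ Set.uIcc (-1:ℝ) 1 := by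
    rw [Set.uIcc_of_le (by norm_num : (0:ℝ) ≤ 1), Set.uIcc_of_le (by norm_num : (-1:ℝ) ≤ 1)]
    exact Set.Icc_subset_Icc (by norm_num) le_rfl
  have hm0 : Set.uIcc (-1:ℝ) 0 ⊆ Set.uIcc (-1:ℝ) 1 := by
    rw [Set.uIcc_of_le (by norm_num : (-1:ℝ) ≤ 0), Set.uIcc_of_le (by norm_num : (-1:ℝ) ≤ 1)]
    exact Set.Icc_subset_Icc le_rfl (by norm_num)
  have hg01 : IntervalIntegrable g volume 0 1 := hgi.mono_set h01
  have hgm0 : IntervalIntegrable g volume (-1) 0 := hgi.mono_set hm0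
  -- product integrabilities
  have mul01 : ∀ f : ℝ → ℝ, Continuous f →
      IntervalIntegrable (fun x => f x * g x) volume 0 1 :=
    fun f hf => hg01.continuousOn_mul hf.continuousOn
  have mulm0 : ∀ f : ℝ → ℝ, Continuous f →
      IntervalIntegrable (fun x => f x * g x) volume (-1) 0 :=
    fun f hf => hgm0.continuousOn_mul hf.continuousOn
  have i1 : IntervalIntegrable (fun x => x^2*(1-x^2) * g x) volume 0 1 :=
    mul01 _ (by fun_prop)
  have i2 : IntervalIntegrable (fun x => x*(1-x^2) * g x) volume 0 1 :=
    mul01 _ (by fun_prop)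
  have i3 : IntervalIntegrable (fun x => (1-x^2) * g x) volume 0 1 :=
    mul01 _ (by fun_prop)
  have i4 : IntervalIntegrable (fun x => (1-x^2)^2 * g x) volume 0 1 :=
    mul01 _ (by fun_prop)
  have i5 : IntervalIntegrable (fun x => x * g x) volume 0 1 :=
    mul01 _ (by fun_prop)
  have i6 : IntervalIntegrable (fun x => x^2 * g x) volume 0 1 :=
    mul01 _ (by fun_prop)
  have j3 : IntervalIntegrable (fun x => (1-x^2) * g x) volume (-1) 0 :=
    mulm0 _ (by fun_prop)
  have j5 : IntervalIntegrable (fun x => x * g x) volume (-1) 0 :=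
    mulm0 _ (by fun_prop)
  have j5' : IntervalIntegrable (fun x => (-x) * g x) volume (-1) 0 :=
    mulm0 _ (by fun_prop)
  -- names
  set I := ∫ x in (0:ℝ)..1, x * (1 - x^2) * g x with hI
  set A2 := ∫ x in (0:ℝ)..1, x^2 * (1 - x^2) * g x with hA2
  set B := ∫ x in (0:ℝ)..1, (1 - x^2)^2 * g x with hB
  set G := ∫ x in (0:ℝ)..1, g x with hG
  clear_value I A2 B G
  -- g nonneg on [0,1]
  have hg01' : ∀ x ∈ Set.Icc (0:ℝ) 1, 0 ≤ g x := fun x hx =>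
    hg x ⟨by linarith [hx.1], hx.2⟩
  -- Cauchy-Schwarz 1 : I^2 ≤ A2 * aplus
  have key1 : ∀ t : ℝ, 0 ≤ A2 * (t * t) + (-2*I) * t + aplus := by
    intro t
    have h0 : 0 ≤ ∫ x in (0:ℝ)..1, (t*x - 1)^2 * ((1-x^2) * g x) := by
      apply intervalIntegral.integral_nonneg (by norm_num)
      intro x hx
      have hx2 : (0:ℝ) ≤ 1 - x^2 := by nlinarith [hx.1, hx.2]
      exact mul_nonneg (sq_nonneg _) (mul_nonneg hx2 (hg01' x hx))
    have e1 : ∫ x in (0:ℝ)..1, (t*x - 1)^2 * ((1-x^2) * g x)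
        = ∫ x in (0:ℝ)..1, ((t*t) * (x^2*(1-x^2) * g x)
            + ((-2*t) * (x*(1-x^2) * g x) + (1-x^2) * g x)) :=
      intervalIntegral.integral_congr (fun x _ => by ring)
    rw [e1, intervalIntegral.integral_add (i1.const_mul _) ((i2.const_mul _).add i3),
      intervalIntegral.integral_add (i2.const_mul _) i3,
      intervalIntegral.integral_const_mul, intervalIntegral.integral_const_mul] at h0
    rw [← hA2, ← hI, ← haplus] at h0
    nlinarith [h0]
  have cs1 : I^2 ≤ A2 * aplus := by
    have := discrim_le_zero key1
    rw [discrim] at this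
    nlinarith [this]
  -- Cauchy-Schwarz 2 : aplus^2 ≤ B * G
  have key2 : ∀ t : ℝ, 0 ≤ B * (t * t) + (-2*aplus) * t + G := by
    intro t
    have h0 : 0 ≤ ∫ x in (0:ℝ)..1, (t*(1-x^2) - 1)^2 * g x := by
      apply intervalIntegral.integral_nonneg (by norm_num)
      intro x hx
      exact mul_nonneg (sq_nonneg _) (hg01' x hx)
    have e1 : ∫ x in (0:ℝ)..1, (t*(1-x^2) - 1)^2 * g x
        = ∫ x in (0:ℝ)..1, ((t*t) * ((1-x^2)^2 * g x)
            + ((-2*t) * ((1-x^2) * g x) + g x)) :=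
      intervalIntegral.integral_congr (fun x _ => by ring)
    rw [e1, intervalIntegral.integral_add (i4.const_mul _) ((i3.const_mul _).add hg01),
      intervalIntegral.integral_add (i3.const_mul _) hg01,
      intervalIntegral.integral_const_mul, intervalIntegral.integral_const_mul] at h0
    rw [← haplus] at h0
    nlinarith [h0]
  have cs2 : aplus^2 ≤ B * G := by
    have := discrim_le_zero key2
    rw [discrim] at this
    nlinarith [this]
  -- identity : A2 = aplus - B
  have idA : A2 = aplus - B := by
    have e1 : A2 = ∫ x in (0:ℝ)..1, ((1-x^2) * g x - (1-x^2)^2 * g x) := by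
      rw [hA2]; exact intervalIntegral.integral_congr (fun x _ => by ring)
    rw [e1, intervalIntegral.integral_sub i3 i4, ← haplus, ← hB]
  -- identity : ∫₀¹ x² g = G - aplus
  have idX : (∫ x in (0:ℝ)..1, x^2 * g x) = G - aplus := by
    have e1 : (∫ x in (0:ℝ)..1, x^2 * g x) = ∫ x in (0:ℝ)..1, (g x - (1-x^2) * g x) :=
      intervalIntegral.integral_congr (fun x _ => by ring)
    rw [e1, intervalIntegral.integral_sub hg01 i3, ← haplus, ← hG]
  -- splits
  have splitg : (∫ x in (-1:ℝ)..0, g x) + G = 1 := by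
    rw [hG, intervalIntegral.integral_add_adjacent_intervals hgm0 hg01, hmass]
  have splitx : (∫ x in (-1:ℝ)..0, x * g x) + (∫ x in (0:ℝ)..1, x * g x) = 0 := by
    rw [intervalIntegral.integral_add_adjacent_intervals j5 i5, hmean]
  have splita : (∫ x in (-1:ℝ)..0, (1-x^2) * g x) + (∫ x in (0:ℝ)..1, (1-x^2) * g x) = a := by
    rw [intervalIntegral.integral_add_adjacent_intervals j3 i3, ha]
  -- ineq1 : ∫₀¹ x² g ≤ ∫₀¹ x g
  have ineq1 : (∫ x in (0:ℝ)..1, x^2 * g x) ≤ ∫ x in (0:ℝ)..1, x * g x := by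
    apply intervalIntegral.integral_mono_on (by norm_num) i6 i5
    intro x hx
    have hgx := hg01' x hx
    have hxx : x^2 ≤ x := by nlinarith [hx.1, hx.2]
    exact mul_le_mul_of_nonneg_right hxx hgx
  -- ineq2 : ∫₋₁⁰ (-x) g ≤ ∫₋₁⁰ ((1-x²)g + g)
  have ineq2 : (∫ x in (-1:ℝ)..0, (-x) * g x)
      ≤ ∫ x in (-1:ℝ)..0, ((1-x^2) * g x + g x) := by
    apply intervalIntegral.integral_mono_on (by norm_num) j5' (j3.add hgm0)
    intro x hx
    have hgx : 0 ≤ g x := hg x ⟨hx.1, by linarith [hx.2]⟩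
    nlinarith [mul_le_mul_of_nonneg_right
      (show -x ≤ 2 - x^2 by nlinarith [hx.1, hx.2]) hgx]
  have e0 : (∫ x in (-1:ℝ)..0, (-x) * g x) = -(∫ x in (-1:ℝ)..0, x * g x) := by
    rw [← intervalIntegral.integral_neg]
    exact intervalIntegral.integral_congr (fun x _ => by ring)
  have ineq2' : -(∫ x in (-1:ℝ)..0, x * g x)
      ≤ (∫ x in (-1:ℝ)..0, (1-x^2) * g x) + (∫ x in (-1:ℝ)..0, g x) := by
    rw [e0, intervalIntegral.integral_add j3 hgm0] at ineq2
    exact ineq2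
  -- 2G ≤ a + 1
  have twoG : 2 * G ≤ a + 1 := by
    have hX : (∫ x in (0:ℝ)..1, x * g x) ≤
        (∫ x in (-1:ℝ)..0, (1-x^2) * g x) + (∫ x in (-1:ℝ)..0, g x) := by
      have : (∫ x in (0:ℝ)..1, x * g x) = -(∫ x in (-1:ℝ)..0, x * g x) := by
        linarith [splitx]
      rw [this]; exact ineq2'
    linarith [ineq1, idX, splitg, splita, hX]
  -- basic nonnegativities
  have hap0 : 0 ≤ aplus := by
    rw [haplus]
    apply intervalIntegral.integral_nonneg (by norm_num)
    intro x hx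
    have hx2 : (0:ℝ) ≤ 1 - x^2 := by nlinarith [hx.1, hx.2]
    exact mul_nonneg hx2 (hg01' x hx)
  have hB0 : 0 ≤ B := by
    rw [hB]
    apply intervalIntegral.integral_nonneg (by norm_num)
    intro x hx
    exact mul_nonneg (sq_nonneg _) (hg01' x hx)
  have hapG : aplus ≤ G := by
    rw [haplus, hG]
    apply intervalIntegral.integral_mono_on (by norm_num) i3 hg01
    intro x hx
    have := hg01' x hx
    nlinarith [hx.1, hx.2]
  -- conclude
  rcases eq_or_lt_of_le hap0 with h0 | hpos
  · have hI0 : I^2 ≤ 0 := by rw [← h0] at cs1; simpa using cs1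
    rw [← h0]
    have : (0:ℝ)^2 - 2 * (0:ℝ)^3 / (a + 1) = 0 := by simp
    rw [this]
    exact hI0
  · have ha1 : 0 < a + 1 := by linarith [twoG, hapG]
    have keydiv : 2 * aplus^3 / (a + 1) ≤ B * aplus := by
      rw [div_le_iff₀ ha1]
      nlinarith [mul_le_mul_of_nonneg_left cs2 (le_of_lt hpos),
        mul_le_mul_of_nonneg_left twoG (mul_nonneg hB0 hap0)]
    nlinarith [cs1, keydiv, idA]
end

section
/- Let g : [-1,1] → ℝ be nonnegative, integrable, with ∫_{-1}^{1} g = 1 and ∫_{-1}^{1} x g(x) dx = 0. Let F₃'(x)/((λ₃/4)) = (7x² - 1)/6 where λ₃ = 18, and set A₃ = ∫_{-1}^{1} (1-x²)·(7x²-1)/6·g(x) dx, a = ∫_{-1}^{1}(1-x²)g, a₊ = ∫_{0}^{1}(1-x²)g, λ = a₊/a (with a > 0). Then A₃ ≤ a - (7/3)·(a²/(a+1))·(2λ² - 2λ + 1) and A₃ ≥ -a/6. -/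
open MeasureTheory

set_option maxHeartbeats 1000000

theorem stmt_9 (g : ℝ → ℝ) (hg : ∀ x ∈ Set.Icc (-1:ℝ) 1, 0 ≤ g x)
    (hgi : IntervalIntegrable g volume (-1) 1)
    (hmass : ∫ x in (-1:ℝ)..1, g x = 1)
    (hmean : ∫ x in (-1:ℝ)..1, x * g x = 0)
    (a aplus lam A3 : ℝ) (hapos : 0 < a)
    (ha : a = ∫ x in (-1:ℝ)..1, (1 - x^2) * g x)
    (haplus : aplus = ∫ x in (0:ℝ)..1, (1 - x^2) * g x)
    (hlam : lam = aplus / a)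
    (hA3 : A3 = ∫ x in (-1:ℝ)..1, (1 - x^2) * ((7 * x^2 - 1)/6) * g x) :
    A3 ≤ a - (7/3) * (a^2/(a + 1)) * (2 * lam^2 - 2 * lam + 1) ∧ -(a/6) ≤ A3 := by
  have ha1 : (0:ℝ) < a + 1 := by linarith
  have hgiP : IntervalIntegrable g volume 0 1 :=
    hgi.mono_set (Set.uIcc_subset_uIcc (by simp) (by simp))
  have hgiM : IntervalIntegrable g volume (-1) 0 :=
    hgi.mono_set (Set.uIcc_subset_uIcc (by simp) (by simp))
  have hmul : ∀ {u v : ℝ}, IntervalIntegrable g volume u v → ∀ (p : ℝ → ℝ), Continuous p →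
      IntervalIntegrable (fun x => p x * g x) volume u v :=
    fun h p hp => h.continuousOn_mul hp.continuousOn
  have i1F : IntervalIntegrable (fun x => (1 - x^2) * g x) volume (-1) 1 :=
    hmul hgi _ (by fun_prop)
  have i1P : IntervalIntegrable (fun x => (1 - x^2) * g x) volume 0 1 :=
    hmul hgiP _ (by fun_prop)
  have i1M : IntervalIntegrable (fun x => (1 - x^2) * g x) volume (-1) 0 :=
    hmul hgiM _ (by fun_prop)
  have i2F : IntervalIntegrable (fun x => (1 - x^2)^2 * g x) volume (-1) 1 :=
    hmul hgi _ (by fun_prop)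
  have i2P : IntervalIntegrable (fun x => (1 - x^2)^2 * g x) volume 0 1 :=
    hmul hgiP _ (by fun_prop)
  have i2M : IntervalIntegrable (fun x => (1 - x^2)^2 * g x) volume (-1) 0 :=
    hmul hgiM _ (by fun_prop)
  have ixP : IntervalIntegrable (fun x => x * g x) volume 0 1 :=
    hmul hgiP _ (by fun_prop)
  have ixM : IntervalIntegrable (fun x => x * g x) volume (-1) 0 :=
    hmul hgiM _ (by fun_prop)
  set mP := ∫ x in (0:ℝ)..1, g x with hmP
  set mM := ∫ x in (-1:ℝ)..0, g x with hmM
  set tP := ∫ x in (0:ℝ)..1, x * g x with htP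
  set tM := ∫ x in (-1:ℝ)..0, x * g x with htM
  set aP := ∫ x in (0:ℝ)..1, (1 - x^2) * g x with haP
  set aM := ∫ x in (-1:ℝ)..0, (1 - x^2) * g x with haM
  set JP := ∫ x in (0:ℝ)..1, (1 - x^2)^2 * g x with hJP
  set JM := ∫ x in (-1:ℝ)..0, (1 - x^2)^2 * g x with hJM
  -- splits
  have hsm : mM + mP = 1 := by
    rw [hmM, hmP, intervalIntegral.integral_add_adjacent_intervals hgiM hgiP, hmass]
  have hst : tM + tP = 0 := by
    rw [htM, htP, intervalIntegral.integral_add_adjacent_intervals ixM ixP, hmean]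
  have hsa : aM + aP = a := by
    rw [haM, haP, intervalIntegral.integral_add_adjacent_intervals i1M i1P, ← ha]
  -- basic nonnegativity
  have hgP : ∀ x ∈ Set.Icc (0:ℝ) 1, 0 ≤ g x := fun x hx => hg x ⟨by linarith [hx.1], hx.2⟩
  have hgM : ∀ x ∈ Set.Icc (-1:ℝ) 0, 0 ≤ g x := fun x hx => hg x ⟨hx.1, by linarith [hx.2]⟩
  have haPnn : 0 ≤ aP := by
    rw [haP]
    exact intervalIntegral.integral_nonneg (by norm_num) (fun x hx =>
      mul_nonneg (by nlinarith [hx.1, hx.2]) (hgP x hx))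
  have haMnn : 0 ≤ aM := by
    rw [haM]
    exact intervalIntegral.integral_nonneg (by norm_num) (fun x hx =>
      mul_nonneg (by nlinarith [hx.1, hx.2]) (hgM x hx))
  -- mP ≤ aP + tP  (since x^2 ≤ x on [0,1])
  have h3P : 0 ≤ aP + tP - mP := by
    have e3 : (∫ x in (0:ℝ)..1, ((1 - x^2) * g x + x * g x - g x)) = aP + tP - mP := by
      rw [intervalIntegral.integral_sub (i1P.add ixP) hgiP,
        intervalIntegral.integral_add i1P ixP]
    rw [← e3]
    exact intervalIntegral.integral_nonneg (by norm_num) (fun x hx => by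
      nlinarith [mul_nonneg (mul_nonneg hx.1 (show (0:ℝ) ≤ 1 - x by linarith [hx.2])) (hgP x hx)])
  -- mM ≤ aM - tM  (since x^2 ≤ -x on [-1,0])
  have h3M : 0 ≤ aM - tM - mM := by
    have e3 : (∫ x in (-1:ℝ)..0, ((1 - x^2) * g x - x * g x - g x)) = aM - tM - mM := by
      rw [intervalIntegral.integral_sub (i1M.sub ixM) hgiM,
        intervalIntegral.integral_sub i1M ixM]
    rw [← e3]
    exact intervalIntegral.integral_nonneg (by norm_num) (fun x hx => by
      nlinarith [mul_nonneg (mul_nonneg (show (0:ℝ) ≤ -x by linarith [hx.2]) (show (0:ℝ) ≤ 1 + x by linarith [hx.1])) (hgM x hx)])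
  -- tP ≤ mP and -tM ≤ mM
  have h5P : 0 ≤ mP - tP := by
    have e5 : (∫ x in (0:ℝ)..1, (g x - x * g x)) = mP - tP := by
      rw [intervalIntegral.integral_sub hgiP ixP]
    rw [← e5]
    exact intervalIntegral.integral_nonneg (by norm_num) (fun x hx => by
      nlinarith [mul_nonneg (show (0:ℝ) ≤ 1 - x by linarith [hx.2]) (hgP x hx)])
  have h5M : 0 ≤ mM + tM := by
    have e5 : (∫ x in (-1:ℝ)..0, (g x + x * g x)) = mM + tM := by
      rw [intervalIntegral.integral_add hgiM ixM]
    rw [← e5]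
    exact intervalIntegral.integral_nonneg (by norm_num) (fun x hx => by
      nlinarith [mul_nonneg (show (0:ℝ) ≤ 1 + x by linarith [hx.1]) (hgM x hx)])
  -- Cauchy–Schwarz style inequalities
  have hCS : ∀ c : ℝ,
      (0 ≤ JP - 2*c*aP + c^2*mP) ∧ (0 ≤ JM - 2*c*aM + c^2*mM) := by
    intro c
    constructor
    · have e7 : (∫ x in (0:ℝ)..1, ((1 - x^2)^2 * g x - (2*c)*((1 - x^2) * g x) + c^2 * g x))
          = JP - 2*c*aP + c^2*mP := by
        rw [intervalIntegral.integral_add ((i2P).sub (i1P.const_mul (2*c))) (hgiP.const_mul (c^2)),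
          intervalIntegral.integral_sub i2P (i1P.const_mul (2*c)),
          intervalIntegral.integral_const_mul, intervalIntegral.integral_const_mul]
      rw [← e7]
      exact intervalIntegral.integral_nonneg (by norm_num) (fun x hx => by
        nlinarith [mul_nonneg (sq_nonneg ((1 - x^2) - c)) (hgP x hx)])
    · have e7 : (∫ x in (-1:ℝ)..0, ((1 - x^2)^2 * g x - (2*c)*((1 - x^2) * g x) + c^2 * g x))
          = JM - 2*c*aM + c^2*mM := by
        rw [intervalIntegral.integral_add ((i2M).sub (i1M.const_mul (2*c))) (hgiM.const_mul (c^2)),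
          intervalIntegral.integral_sub i2M (i1M.const_mul (2*c)),
          intervalIntegral.integral_const_mul, intervalIntegral.integral_const_mul]
      rw [← e7]
      exact intervalIntegral.integral_nonneg (by norm_num) (fun x hx => by
        nlinarith [mul_nonneg (sq_nonneg ((1 - x^2) - c)) (hgM x hx)])
  -- 2 mP ≤ 1 + aP, 2 mM ≤ 1 + aM
  have hmPb : 2*mP ≤ 1 + aP := by linarith
  have hmMb : 2*mM ≤ 1 + aM := by linarith
  -- key per-half bounds
  have keyP : 2*aP^2 ≤ JP*(a+1) := by
    have h7 := (hCS (2*aP/(a+1))).1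
    have h9 := mul_nonneg (le_of_lt (by positivity : (0:ℝ) < (a+1)^2)) h7
    have e : (a+1)^2 * (JP - 2*(2*aP/(a+1))*aP + (2*aP/(a+1))^2*mP)
        = JP*(a+1)^2 - 4*aP^2*(a+1) + 4*aP^2*mP := by
      field_simp
      ring
    rw [e] at h9
    nlinarith [mul_le_mul_of_nonneg_left hmPb (sq_nonneg aP),
      mul_le_mul_of_nonneg_left (show aP ≤ a by linarith) (sq_nonneg aP), ha1, haPnn]
  have keyM : 2*aM^2 ≤ JM*(a+1) := by
    have h7 := (hCS (2*aM/(a+1))).2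
    have h9 := mul_nonneg (le_of_lt (by positivity : (0:ℝ) < (a+1)^2)) h7
    have e : (a+1)^2 * (JM - 2*(2*aM/(a+1))*aM + (2*aM/(a+1))^2*mM)
        = JM*(a+1)^2 - 4*aM^2*(a+1) + 4*aM^2*mM := by
      field_simp
      ring
    rw [e] at h9
    nlinarith [mul_le_mul_of_nonneg_left hmMb (sq_nonneg aM),
      mul_le_mul_of_nonneg_left (show aM ≤ a by linarith) (sq_nonneg aM), ha1, haMnn]
  -- A3 = a - (7/6)(JM + JP)
  have eA : A3 = a - (7/6)*(JM + JP) := by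
    have e1 : a - (7/6)*(JM + JP)
        = ∫ x in (-1:ℝ)..1, ((1 - x^2) * g x - (7/6)*((1 - x^2)^2 * g x)) := by
      rw [intervalIntegral.integral_sub i1F (i2F.const_mul (7/6)),
        intervalIntegral.integral_const_mul, ← ha,
        ← intervalIntegral.integral_add_adjacent_intervals i2M i2P, ← hJM, ← hJP]
    rw [hA3, e1]
    exact intervalIntegral.integral_congr (fun x _ => by ring)
  constructor
  · -- upper bound
    have hJkey : 2*(2*aP^2 - 2*aP*a + a^2) ≤ (JM + JP)*(a+1) := by
      nlinarith [keyP, keyM, hsa]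
    have elam : (2 * lam^2 - 2 * lam + 1) * a^2 = 2*aP^2 - 2*aP*a + a^2 := by
      rw [hlam, haplus]
      field_simp
    have erhs : (7/3) * (a^2/(a + 1)) * (2 * lam^2 - 2 * lam + 1)
        = (7/3) * ((2*aP^2 - 2*aP*a + a^2)/(a+1)) := by
      rw [← elam]; ring
    have hdiv : (2*aP^2 - 2*aP*a + a^2)/(a+1) ≤ (JM + JP)/2 := by
      rw [div_le_div_iff₀ ha1 two_pos]
      nlinarith [hJkey]
    rw [erhs, eA]
    linarith
  · -- lower bound
    have eL : (∫ x in (-1:ℝ)..1,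
        ((1 - x^2) * ((7 * x^2 - 1)/6) * g x + (1/6)*((1 - x^2) * g x))) = A3 + (1/6)*a := by
      rw [intervalIntegral.integral_add (hmul hgi _ (by fun_prop)) (i1F.const_mul (1/6)),
        intervalIntegral.integral_const_mul, ← ha, ← hA3]
    have hLnn : 0 ≤ A3 + (1/6)*a := by
      rw [← eL]
      exact intervalIntegral.integral_nonneg (by norm_num) (fun x hx => by
        nlinarith [mul_nonneg (mul_nonneg (sq_nonneg x)
          (show (0:ℝ) ≤ 1 - x^2 by nlinarith [hx.1, hx.2])) (hg x hx)])
    linarith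
end

section
/- For every integer n ≥ 2 and every real ν ≥ 1, the largest zero x_{n1}(ν) of the Gegenbauer polynomial C_n^ν satisfies x_{n1}(ν) ≤ sqrt((n-1)(n+2ν-2)/((n+ν-2)(n+ν-1))) · cos(π/(n+1)). -/
set_option maxHeartbeats 1000000


/-- The Gegenbauer (ultraspherical) polynomial `C_n^ν` as a function on `ℝ`,
defined by the standard three-term recurrence
`(n+2) C_{n+2}(x) = 2(n+1+ν) x C_{n+1}(x) - (n+2ν) C_n(x)`. -/
noncomputable def gegenbauer (ν : ℝ) : ℕ → ℝ → ℝ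
  | 0 => fun _ => 1
  | 1 => fun x => 2 * ν * x
  | (n + 2) => fun x =>
      (2 * ((n:ℝ) + 1 + ν) * x * gegenbauer ν (n + 1) x
        - ((n:ℝ) + 2 * ν) * gegenbauer ν n x) / ((n:ℝ) + 2)

theorem stmt_14 (n : ℕ) (hn : 2 ≤ n) (ν : ℝ) (hν : 1 ≤ ν)
    (x : ℝ) (hx : gegenbauer ν n x = 0) :
    x ≤ Real.sqrt (((n:ℝ) - 1) * ((n:ℝ) + 2 * ν - 2)
        / ((((n:ℝ) + ν - 2)) * (((n:ℝ) + ν - 1)))) * Real.cos (Real.pi / ((n:ℝ) + 1)) := by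
  by_contra hcon
  push_neg at hcon
  set θ : ℝ := Real.pi / ((n:ℝ) + 1) with hθ
  have hn2 : (2:ℝ) ≤ (n:ℝ) := by exact_mod_cast hn
  have hNpos : 0 < ((n:ℝ) - 1) * ((n:ℝ) + 2 * ν - 2) := by nlinarith
  have hDpos : 0 < ((n:ℝ) + ν - 2) * ((n:ℝ) + ν - 1) := by nlinarith
  have hfrac : 0 < ((n:ℝ) - 1) * ((n:ℝ) + 2 * ν - 2) / (((n:ℝ) + ν - 2) * ((n:ℝ) + ν - 1)) :=
    div_pos hNpos hDpos
  set A : ℝ := Real.sqrt (((n:ℝ) - 1) * ((n:ℝ) + 2 * ν - 2)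
      / (((n:ℝ) + ν - 2) * ((n:ℝ) + ν - 1))) / 2 with hA
  have hApos : 0 < A := by
    rw [hA]
    positivity
  have h2A : 2 * A = Real.sqrt (((n:ℝ) - 1) * ((n:ℝ) + 2 * ν - 2)
      / (((n:ℝ) + ν - 2) * ((n:ℝ) + ν - 1))) := by rw [hA]; ring
  have hA2 : 4 * A ^ 2 = ((n:ℝ) - 1) * ((n:ℝ) + 2 * ν - 2)
      / (((n:ℝ) + ν - 2) * ((n:ℝ) + ν - 1)) := by
    have := Real.sq_sqrt hfrac.le
    rw [hA]; nlinarith [this]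
  have hx2A : 2 * A * Real.cos θ < x := by rw [h2A]; exact hcon
  have hθpos : 0 < θ := by
    rw [hθ]; positivity
  have hπeq : ((n:ℝ) + 1) * θ = Real.pi := by
    rw [hθ]; field_simp
  -- sine positivity for arguments r*θ with 0 < r ≤ n
  have hsinR : ∀ r : ℝ, 0 < r → r ≤ (n:ℝ) → 0 < Real.sin (r * θ) := by
    intro r hr hrn
    apply Real.sin_pos_of_pos_of_lt_pi
    · exact mul_pos hr hθpos
    · rw [← hπeq]
      have : r < (n:ℝ) + 1 := by linarith
      exact (mul_lt_mul_iff_left₀ hθpos).mpr this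
  -- Chebyshev-type trig identity
  have htrig : ∀ r : ℝ, Real.sin ((r + 2) * θ)
      = 2 * Real.cos θ * Real.sin ((r + 1) * θ) - Real.sin (r * θ) := by
    intro r
    have e1 : (r + 2) * θ = (r + 1) * θ + θ := by ring
    have e2 : r * θ = (r + 1) * θ - θ := by ring
    rw [e1, e2, Real.sin_add, Real.sin_sub]
    ring
  -- the key coefficient bound  λ_{k+1} ≤ A²  (in cross-multiplied, then divided form)
  have hlam : ∀ k : ℕ, k + 2 ≤ n →
      ((k:ℝ) + 1) * ((k:ℝ) + 2 * ν) ≤ 4 * A ^ 2 * (((k:ℝ) + ν) * ((k:ℝ) + 1 + ν)) := by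
    intro k hk
    have hkn : (k:ℝ) + 2 ≤ (n:ℝ) := by exact_mod_cast hk
    have hcross : ((k:ℝ) + 1) * ((k:ℝ) + 2 * ν) * (((n:ℝ) + ν - 2) * ((n:ℝ) + ν - 1))
        ≤ (((n:ℝ) - 1) * ((n:ℝ) + 2 * ν - 2)) * (((k:ℝ) + ν) * ((k:ℝ) + 1 + ν)) := by
      have hfac : 0 ≤ ν * (ν - 1) * (((n:ℝ) - 1) - ((k:ℝ) + 1))
          * (((k:ℝ) + 1) + ((n:ℝ) - 1) + 2 * ν - 1) := by
        apply mul_nonneg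
        apply mul_nonneg
        apply mul_nonneg <;> nlinarith
        · linarith
        · nlinarith
      nlinarith [hfac]
    rw [hA2, div_mul_eq_mul_div, le_div_iff₀ hDpos]
    nlinarith [hcross]
  -- main induction : positivity of all gegenbauer values at x, with ratio control
  have main : ∀ k : ℕ, k + 1 ≤ n →
      0 < gegenbauer ν k x ∧
      2 * A * ((k:ℝ) + ν) * Real.sin (((k:ℝ) + 2) * θ) * gegenbauer ν k x
        < ((k:ℝ) + 1) * Real.sin (((k:ℝ) + 1) * θ) * gegenbauer ν (k + 1) x := by
    intro k
    induction k with
    | zero =>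
      intro _
      have hg0 : gegenbauer ν 0 x = 1 := rfl
      have hg1 : gegenbauer ν 1 x = 2 * ν * x := rfl
      have hsθ : 0 < Real.sin θ := by
        have := hsinR 1 one_pos (by linarith)
        rwa [one_mul] at this
      constructor
      · rw [hg0]; norm_num
      · rw [hg0, hg1]
        push_cast
        norm_num
        rw [Real.sin_two_mul]
        nlinarith [mul_pos hsθ (show (0:ℝ) < ν by linarith),
          mul_lt_mul_of_pos_right hx2A (mul_pos hsθ (show (0:ℝ) < ν by linarith))]
    | succ k ih =>
      intro hk
      obtain ⟨h0, h1⟩ := ih (by omega)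
      have hkν : 0 < (k:ℝ) + ν := by
        have := Nat.cast_nonneg (α := ℝ) k
        linarith
      have hkr : (k:ℝ) + 2 ≤ (n:ℝ) := by exact_mod_cast hk
      have hk0 : (0:ℝ) ≤ (k:ℝ) := Nat.cast_nonneg k
      have hs1 : 0 < Real.sin (((k:ℝ) + 1) * θ) := hsinR _ (by linarith) (by linarith)
      have hs2 : 0 < Real.sin (((k:ℝ) + 2) * θ) := hsinR _ (by linarith) (by linarith)
      have hC1 : 0 < gegenbauer ν (k + 1) x := by
        have hl : 0 < 2 * A * ((k:ℝ) + ν) * Real.sin (((k:ℝ) + 2) * θ) * gegenbauer ν k x := by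
          apply mul_pos (mul_pos (mul_pos (by linarith) hkν) hs2) h0
        have hr := hl.trans h1
        by_contra hle
        push_neg at hle
        nlinarith [mul_nonpos_of_nonneg_of_nonpos
          (mul_pos (show (0:ℝ) < (k:ℝ)+1 by positivity) hs1).le hle]
      refine ⟨hC1, ?_⟩
      push_cast
      -- recurrence, cleared of the denominator
      have hrec : ((k:ℝ) + 2) * gegenbauer ν (k + 2) x
          = 2 * ((k:ℝ) + 1 + ν) * x * gegenbauer ν (k + 1) x
            - ((k:ℝ) + 2 * ν) * gegenbauer ν k x := by
        have hd : ((k:ℝ) + 2) ≠ 0 := by positivity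
        show ((k:ℝ) + 2) * ((2 * ((k:ℝ) + 1 + ν) * x * gegenbauer ν (k + 1) x
            - ((k:ℝ) + 2 * ν) * gegenbauer ν k x) / ((k:ℝ) + 2)) = _
        field_simp
      have hs3eq : Real.sin (((k:ℝ) + 1 + 2) * θ)
          = 2 * Real.cos θ * Real.sin (((k:ℝ) + 2) * θ) - Real.sin (((k:ℝ) + 1) * θ) := by
        have := htrig ((k:ℝ) + 1)
        rw [show ((k:ℝ) + 1 + 1) * θ = ((k:ℝ) + 2) * θ by ring] at this
        exact this
      set s1 := Real.sin (((k:ℝ) + 1) * θ)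
      set s2 := Real.sin (((k:ℝ) + 2) * θ)
      set s3 := Real.sin (((k:ℝ) + 1 + 2) * θ)
      set Ck := gegenbauer ν k x
      set Ck1 := gegenbauer ν (k + 1) x
      set Ck2 := gegenbauer ν (k + 2) x
      show 2 * A * ((k:ℝ) + 1 + ν) * s3 * Ck1 < ((k:ℝ) + 1 + 1) * Real.sin (((k:ℝ) + 1 + 1) * θ) * Ck2
      rw [show ((k:ℝ) + 1 + 1) * θ = ((k:ℝ) + 2) * θ by ring]
      -- scaled hypotheses for the linear combination
      have Hs1 : ((k:ℝ) + 2 * ν) * (2 * A * ((k:ℝ) + ν) * s2 * Ck)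
          ≤ ((k:ℝ) + 2 * ν) * (((k:ℝ) + 1) * s1 * Ck1) :=
        mul_le_mul_of_nonneg_left h1.le (by linarith)
      have Hs2 : ((k:ℝ) + 1) * ((k:ℝ) + 2 * ν) * (s1 * Ck1)
          ≤ 4 * A ^ 2 * (((k:ℝ) + ν) * ((k:ℝ) + 1 + ν)) * (s1 * Ck1) :=
        mul_le_mul_of_nonneg_right (hlam k hk) (mul_pos hs1 hC1).le
      have Hs3 : (4 * A * (((k:ℝ) + ν) * (((k:ℝ) + 1 + ν)))) * (s2 * Ck1) * (2 * A * Real.cos θ)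
          < (4 * A * (((k:ℝ) + ν) * (((k:ℝ) + 1 + ν)))) * (s2 * Ck1) * x := by
        apply mul_lt_mul_of_pos_left hx2A
        apply mul_pos (mul_pos (by positivity) (mul_pos hkν (by linarith))) (mul_pos hs2 hC1)
      have hP : 0 < 2 * A * ((k:ℝ) + ν) := by
        apply mul_pos (by linarith) hkν
      have hbig : 2 * A * ((k:ℝ) + ν) * (2 * A * ((k:ℝ) + 1 + ν) * s3 * Ck1)
          < 2 * A * ((k:ℝ) + ν) * ((((k:ℝ) + 1) + 1) * s2 * Ck2) := by
        have hchain : 2 * A * ((k:ℝ) + ν) * ((((k:ℝ) + 1) + 1) * s2 * Ck2)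
            = 2 * ((k:ℝ) + 1 + ν) * x * (2 * A * ((k:ℝ) + ν) * s2 * Ck1)
              - ((k:ℝ) + 2 * ν) * (2 * A * ((k:ℝ) + ν) * s2 * Ck) := by
          have : 2 * A * ((k:ℝ) + ν) * ((((k:ℝ) + 1) + 1) * s2 * Ck2)
              = 2 * A * ((k:ℝ) + ν) * s2 * (((k:ℝ) + 2) * Ck2) := by ring
          rw [this, hrec]; ring
        rw [hchain, hs3eq]
        nlinarith [Hs1, Hs2, Hs3]
      have := (mul_lt_mul_iff_right₀ hP).mp hbig
      linarith [this]
  -- final contradiction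
  obtain ⟨hp, hq⟩ := main (n - 1) (by omega)
  have hcast : ((n - 1 : ℕ) : ℝ) = (n:ℝ) - 1 := by
    have : (1:ℕ) ≤ n := by omega
    push_cast [Nat.cast_sub this]
    ring
  have hidx : n - 1 + 1 = n := by omega
  rw [hidx, hcast] at hq
  rw [show ((n:ℝ) - 1 + 2) * θ = ((n:ℝ) + 1) * θ by ring, hπeq, Real.sin_pi, hx] at hq
  simp at hq
end

section
/- For every integer k > 50, the largest zero x_{k-2,1}(7/2) of the Gegenbauer polynomial C_{k-2}^{7/2} satisfies x_{k-2,1}(7/2) ≤ sqrt((k-3)(k+3)/((k-1/2)(k+1/2))) · cos(π/(k-1)) ≤ 1 - 9.1/k². -/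
lemma geg2 (ν : ℝ) (n : ℕ) (x : ℝ) : gegenbauer ν (n+2) x =
      (2 * ((n:ℝ) + 1 + ν) * x * gegenbauer ν (n + 1) x
        - ((n:ℝ) + 2 * ν) * gegenbauer ν n x) / ((n:ℝ) + 2) := by
  rw [gegenbauer]

lemma geg0 (ν x : ℝ) : gegenbauer ν 0 x = 1 := rfl
lemma geg1 (ν x : ℝ) : gegenbauer ν 1 x = 2 * ν * x := rfl

attribute [irreducible] gegenbauer

lemma geg_pos_aux (x θ : ℝ) (s : ℕ → ℝ) (N : ℕ) (hx0 : 0 < x)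
    (hcos : 0 < Real.cos θ)
    (hs0 : s 0 = 0)
    (hrec : ∀ j : ℕ, s (j+2) = 2 * Real.cos θ * s (j+1) - s j)
    (hs_pos : ∀ j : ℕ, 1 ≤ j → j ≤ N + 1 → 0 < s j)
    (hs_nonneg : ∀ j : ℕ, j ≤ N + 2 → 0 ≤ s j)
    (key : ∀ j : ℕ, j + 1 ≤ N → Real.cos θ^2 * (((j:ℝ)+1)*((j:ℝ)+7)) < x^2 * (((j:ℝ)+7/2)*((j:ℝ)+9/2))) :
    ∀ j : ℕ, j ≤ N →
      0 < gegenbauer (7/2) j x ∧ 0 < gegenbauer (7/2) (j+1) x ∧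
      2*((j:ℝ)+7/2)*x*(s (j+2))*(gegenbauer (7/2) j x)
        ≤ 2*Real.cos θ*((j:ℝ)+1)*(s (j+1))*(gegenbauer (7/2) (j+1) x) := by
  intro j
  induction j with
  | zero =>
    intro hN
    have g0 : gegenbauer (7/2) 0 x = 1 := geg0 _ _
    have g1 : gegenbauer (7/2) 1 x = 2 * (7/2) * x := geg1 _ _
    refine ⟨by rw [g0]; norm_num, by rw [g1]; positivity, ?_⟩
    have hs2 : s 2 = 2 * Real.cos θ * s 1 := by
      have := hrec 0
      rw [hs0] at this
      linarith [this]
    rw [g0, g1, hs2]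
    apply le_of_eq
    push_cast
    ring
  | succ j ih =>
    intro hj
    obtain ⟨h0, h1, h2⟩ := ih (by omega)
    have sp1 : 0 < s (j+1) := hs_pos (j+1) (by omega) (by omega)
    have sp2 : 0 < s (j+2) := hs_pos (j+2) (by omega) (by omega)
    have sp3 : 0 ≤ s (j+3) := hs_nonneg (j+3) (by omega)
    have hkey := key j (by omega)
    have star : 2*Real.cos θ*(s (j+2))*((j:ℝ)+7) * (gegenbauer (7/2) j x)
        < 2*((j:ℝ)+9/2)*x*(s (j+1)) * (gegenbauer (7/2) (j+1) x) := by
      have step1 := mul_le_mul_of_nonneg_left h2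
        (mul_nonneg (mul_nonneg (by norm_num) hcos.le)
          (by positivity) : (0:ℝ) ≤ 2*Real.cos θ*((j:ℝ)+7))
      have step2 : 2*Real.cos θ*((j:ℝ)+7) * (2*Real.cos θ*((j:ℝ)+1)*(s (j+1))*(gegenbauer (7/2) (j+1) x))
          < 2*((j:ℝ)+7/2)*x * (2*((j:ℝ)+9/2)*x*(s (j+1))*(gegenbauer (7/2) (j+1) x)) := by
        linarith [mul_lt_mul_of_pos_right hkey (mul_pos sp1 h1)]
      have h3 := lt_of_le_of_lt step1 step2
      have hc : (0:ℝ) < 2*((j:ℝ)+7/2)*x := by positivity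
      have h4 : (2*((j:ℝ)+7/2)*x) * (2*Real.cos θ*(s (j+2))*((j:ℝ)+7) * (gegenbauer (7/2) j x))
          < (2*((j:ℝ)+7/2)*x) * (2*((j:ℝ)+9/2)*x*(s (j+1)) * (gegenbauer (7/2) (j+1) x)) := by
        linarith [h3]
      exact lt_of_mul_lt_mul_left h4 hc.le
    have hne : ((j:ℝ)+2) ≠ 0 := by positivity
    have e2' : ((j:ℝ)+2) * gegenbauer (7/2) (j+2) x
        = 2*((j:ℝ)+9/2)*x*(gegenbauer (7/2) (j+1) x) - ((j:ℝ)+7)*(gegenbauer (7/2) j x) := by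
      rw [geg2, mul_comm, div_mul_cancel₀ _ hne]
      ring
    have hr : s (j+3) = 2*Real.cos θ * s (j+2) - s (j+1) := hrec (j+1)
    have hT : 2*((j:ℝ)+9/2)*x*(s (j+3))*(gegenbauer (7/2) (j+1) x)
        < 2*Real.cos θ*(s (j+2))*(((j:ℝ)+2) * gegenbauer (7/2) (j+2) x) := by
      rw [e2', hr]
      linarith [star]
    have hpos2 : 0 < gegenbauer (7/2) (j+2) x := by
      have hlhs : 0 ≤ 2*((j:ℝ)+9/2)*x*(s (j+3))*(gegenbauer (7/2) (j+1) x) :=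
        mul_nonneg (mul_nonneg (by positivity) sp3) h1.le
      have hc : (0:ℝ) < 2*Real.cos θ*(s (j+2))*((j:ℝ)+2) :=
        mul_pos (mul_pos (mul_pos (by norm_num) hcos) sp2) (by positivity)
      nlinarith [hT, hlhs, hc]
    refine ⟨h1, hpos2, ?_⟩
    have goalstep : 2*(((j:ℝ)+1)+7/2)*x*(s (j+3))*(gegenbauer (7/2) (j+1) x)
        ≤ 2*Real.cos θ*(((j:ℝ)+1)+1)*(s (j+2))*(gegenbauer (7/2) (j+2) x) := by
      linarith [hT]
    push_cast
    exact goalstep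

lemma geg_pos (m : ℕ) (x : ℝ)
    (hx : Real.sqrt ((((m:ℝ)+51) - 3) * (((m:ℝ)+51) + 3) / ((((m:ℝ)+51) - 1/2) * (((m:ℝ)+51) + 1/2)))
            * Real.cos (Real.pi / (((m:ℝ)+51) - 1)) < x) :
    0 < gegenbauer (7/2) (m + 49) x := by
  have hm0 : (0:ℝ) ≤ (m:ℝ) := Nat.cast_nonneg m
  set θ : ℝ := Real.pi / (((m:ℝ)+51) - 1) with hθdef
  have hθpos : 0 < θ := by
    apply div_pos Real.pi_pos; linarith
  have hθlt : θ < Real.pi / 2 := by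
    rw [hθdef, div_lt_div_iff₀ (by linarith) (by norm_num)]
    nlinarith [Real.pi_pos]
  have hcos : 0 < Real.cos θ := Real.cos_pos_of_mem_Ioo ⟨by linarith, hθlt⟩
  have hθπ : ((m:ℝ)+50) * θ = Real.pi := by
    rw [hθdef, show ((m:ℝ)+51-1) = (m:ℝ)+50 by ring, mul_comm,
      div_mul_cancel₀ _ (by linarith : ((m:ℝ)+50) ≠ 0)]
  have hSpos : 0 < (((m:ℝ)+51) - 3) * (((m:ℝ)+51) + 3) / ((((m:ℝ)+51) - 1/2) * (((m:ℝ)+51) + 1/2)) := by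
    apply div_pos <;> apply mul_pos <;> linarith
  have hB0 : 0 < Real.sqrt ((((m:ℝ)+51) - 3) * (((m:ℝ)+51) + 3) / ((((m:ℝ)+51) - 1/2) * (((m:ℝ)+51) + 1/2)))
            * Real.cos θ := mul_pos (Real.sqrt_pos.mpr hSpos) hcos
  have hx0 : 0 < x := lt_trans hB0 hx
  have hq : (0:ℝ) < (((m:ℝ)+51) - 1/2) * (((m:ℝ)+51) + 1/2) := by nlinarith
  have h := geg_pos_aux x θ (fun j => Real.sin ((j:ℝ) * θ)) (m+48) hx0 hcos
    (by simp)
    (by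
      intro j
      push_cast
      rw [show ((j:ℝ)+2)*θ = (((j:ℝ)+1)*θ) + θ by ring, Real.sin_add,
          show ((j:ℝ))*θ = (((j:ℝ)+1)*θ) - θ by ring, Real.sin_sub]
      ring)
    (by
      intro j h1 h2
      apply Real.sin_pos_of_pos_of_lt_pi
      · have : (1:ℝ) ≤ (j:ℝ) := by exact_mod_cast h1
        nlinarith
      · have : (j:ℝ) ≤ (m:ℝ) + 49 := by exact_mod_cast h2
        nlinarith)
    (by
      intro j h2
      apply Real.sin_nonneg_of_nonneg_of_le_pi
      · positivity
      · have : (j:ℝ) ≤ (m:ℝ) + 50 := by exact_mod_cast h2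
        nlinarith)
    (by
      intro j hj
      have hjR : (j:ℝ) + 1 ≤ (m:ℝ) + 48 := by
        have : ((j+1:ℕ):ℝ) ≤ ((m+48:ℕ):ℝ) := by exact_mod_cast hj
        push_cast at this
        linarith
      have hB2 : (((m:ℝ)+51) - 3) * (((m:ℝ)+51) + 3) / ((((m:ℝ)+51) - 1/2) * (((m:ℝ)+51) + 1/2)) * Real.cos θ^2 < x^2 := by
        have h1 := pow_lt_pow_left₀ hx (le_of_lt hB0) (n := 2) (by norm_num)
        rw [mul_pow, Real.sq_sqrt (le_of_lt hSpos)] at h1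
        exact h1
      have hAQ : ((((m:ℝ)+51) - 3) * (((m:ℝ)+51) + 3)) * Real.cos θ^2 < x^2 * ((((m:ℝ)+51) - 1/2) * (((m:ℝ)+51) + 1/2)) := by
        rw [div_mul_eq_mul_div, div_lt_iff₀ hq] at hB2
        linarith
      have hmono : (((j:ℝ)+1)*((j:ℝ)+7)) * ((((m:ℝ)+51) - 1/2) * (((m:ℝ)+51) + 1/2))
          ≤ ((((m:ℝ)+51) - 3) * (((m:ℝ)+51) + 3)) * (((j:ℝ)+7/2)*((j:ℝ)+9/2)) := by
        nlinarith [mul_nonneg (sub_nonneg.mpr hjR) (by linarith : (0:ℝ) ≤ ((m:ℝ)+48) + ((j:ℝ)+1) + 6)]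
      have hD : (0:ℝ) < ((j:ℝ)+7/2)*((j:ℝ)+9/2) := by positivity
      nlinarith [mul_le_mul_of_nonneg_left hmono (sq_nonneg (Real.cos θ)),
        mul_lt_mul_of_pos_right hAQ hD, hq, hD])
    (m+48) le_rfl
  have h2 := h.2.1
  have hidx : m + 48 + 1 = m + 49 := by omega
  rw [hidx] at h2
  exact h2

set_option maxHeartbeats 2000000 in
lemma part2 (r : ℝ) (hr : 51 ≤ r) :
    Real.sqrt ((r - 3) * (r + 3) / ((r - 1/2) * (r + 1/2))) * Real.cos (Real.pi / (r - 1))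
      ≤ 1 - 9.1 / r^2 := by
  have hr2 : (2601:ℝ) ≤ r^2 := by nlinarith
  have hq : (0:ℝ) < (r - 1/2) * (r + 1/2) := by nlinarith
  have hd : (0:ℝ) < (r-1)^2 := by nlinarith
  have hd2 : (2500:ℝ) ≤ (r-1)^2 := by nlinarith
  have hS0 : (0:ℝ) ≤ (r - 3) * (r + 3) / ((r - 1/2) * (r + 1/2)) :=
    div_nonneg (by nlinarith) hq.le
  have hSQ : (r - 3) * (r + 3) / ((r - 1/2) * (r + 1/2)) * ((r - 1/2) * (r + 1/2))
      = (r - 3) * (r + 3) := div_mul_cancel₀ _ hq.ne'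
  have hsq : Real.sqrt ((r - 3) * (r + 3) / ((r - 1/2) * (r + 1/2)))
      ≤ (1 + (r - 3) * (r + 3) / ((r - 1/2) * (r + 1/2))) / 2 := by
    nlinarith [Real.sq_sqrt hS0, sq_nonneg (Real.sqrt ((r - 3) * (r + 3) / ((r - 1/2) * (r + 1/2))) - 1)]
  have h1 : (35:ℝ)/8 / ((r-1/2)*(r+1/2)) ≤ (1 - (r - 3) * (r + 3) / ((r - 1/2) * (r + 1/2)))/2 := by
    rw [div_le_iff₀ hq]
    nlinarith [hSQ]
  have hA : Real.sqrt ((r - 3) * (r + 3) / ((r - 1/2) * (r + 1/2)))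
      ≤ 1 - (35:ℝ)/8 / ((r-1/2)*(r+1/2)) := by linarith
  -- cosine bound
  have hπ1 : Real.pi ≤ 3.1416 := by linarith [Real.pi_lt_d6]
  have hπ0 : 3.141592 ≤ Real.pi := by linarith [Real.pi_gt_d6]
  have hπ2 : (9.8696:ℝ) ≤ Real.pi^2 := by nlinarith
  have hπ2' : Real.pi^2 ≤ (9.87:ℝ) := by nlinarith
  have hr1 : (0:ℝ) < r - 1 := by linarith
  have hx0 : (0:ℝ) < Real.pi / (r - 1) := div_pos Real.pi_pos hr1
  have hx1 : |Real.pi / (r - 1)| ≤ 1 := by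
    rw [abs_of_pos hx0, div_le_one hr1]; linarith
  have hcb := (abs_le.mp (Real.cos_bound hx1)).2
  rw [abs_of_pos hx0] at hcb
  have h2 : Real.cos (Real.pi / (r - 1))
      ≤ 1 - (Real.pi^2/(r-1)^2)/2 + (Real.pi^2/(r-1)^2)^2*(5/96) := by
    have e1 : (Real.pi / (r-1))^2 = Real.pi^2 / (r-1)^2 := div_pow _ _ _
    have e2 : (Real.pi / (r-1))^4 = (Real.pi^2 / (r-1)^2)^2 := by
      rw [← e1]; ring
    rw [e2] at hcb
    rw [e1] at hcb
    linarith
  have hu0 : (0:ℝ) ≤ Real.pi^2/(r-1)^2 := by positivity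
  have hu_low : (98696:ℝ)/10000/(r-1)^2 ≤ Real.pi^2/(r-1)^2 := by
    gcongr
    linarith
  have hu_up : Real.pi^2/(r-1)^2 ≤ (9.87:ℝ)/2500 :=
    div_le_div₀ (by norm_num) (by linarith) (by norm_num) hd2
  have hC : Real.cos (Real.pi / (r-1)) ≤ 1 - (493:ℝ)/100/(r-1)^2 := by
    have hint := mul_le_mul_of_nonneg_left hu_up hu0
    have hv0 : (0:ℝ) ≤ 1/(r-1)^2 := by positivity
    ring_nf at h2 hu_low hint hv0 ⊢
    linarith [h2, hu_low, hint, hv0]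
  -- combine
  have hc0 : (0:ℝ) ≤ (493:ℝ)/100/(r-1)^2 := by positivity
  have ha0 : (0:ℝ) ≤ (35:ℝ)/8 / ((r-1/2)*(r+1/2)) := by positivity
  have ha_small : (35:ℝ)/8 / ((r-1/2)*(r+1/2)) ≤ 17/10000 := by
    rw [div_le_iff₀ hq]; linarith [hr2]
  have hc_small : (493:ℝ)/100/(r-1)^2 ≤ 1 := by
    rw [div_le_one hd]; linarith [hd2]
  have hcos0 : (0:ℝ) ≤ Real.cos (Real.pi / (r-1)) := by
    apply Real.cos_nonneg_of_mem_Icc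
    constructor
    · linarith [hx0]
    · rw [div_le_div_iff₀ hr1 (by norm_num : (0:ℝ) < 2)]
      have := mul_le_mul_of_nonneg_left (show (2:ℝ) ≤ r-1 by linarith) Real.pi_pos.le
      linarith [this]
  have hmul : Real.sqrt ((r - 3) * (r + 3) / ((r - 1/2) * (r + 1/2))) * Real.cos (Real.pi / (r - 1))
      ≤ (1 - (35:ℝ)/8 / ((r-1/2)*(r+1/2))) * (1 - (493:ℝ)/100/(r-1)^2) :=
    mul_le_mul hA hC hcos0 (by linarith)
  have ha_low : (35:ℝ)/8/r^2 ≤ (35:ℝ)/8 / ((r-1/2)*(r+1/2)) := by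
    gcongr
    nlinarith
  have hc_low : (493:ℝ)/100/r^2 ≤ (493:ℝ)/100/(r-1)^2 := by
    gcongr
    linarith
  have hac : ((35:ℝ)/8 / ((r-1/2)*(r+1/2))) * ((493:ℝ)/100/(r-1)^2)
      ≤ (17/10000) * ((493:ℝ)/100/(r-1)^2) := mul_le_mul_of_nonneg_right ha_small hc0
  have hfinal : (1 - (35:ℝ)/8 / ((r-1/2)*(r+1/2))) * (1 - (493:ℝ)/100/(r-1)^2)
      ≤ 1 - 9.1/r^2 := by
    have hw0 : (0:ℝ) ≤ 1/r^2 := by positivity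
    have hcI : (0:ℝ) ≤ 1/(r-1)^2 := by positivity
    ring_nf at ha_low hc_low hac hw0 hcI ⊢
    linarith [ha_low, hc_low, hac, hw0, hcI]
  linarith [hmul, hfinal]

theorem stmt_15 (k : ℕ) (hk : 50 < k) :
    (∀ x : ℝ, gegenbauer (7/2) (k - 2) x = 0 →
      x ≤ Real.sqrt (((k:ℝ) - 3) * ((k:ℝ) + 3) / (((k:ℝ) - 1/2) * ((k:ℝ) + 1/2)))
            * Real.cos (Real.pi / ((k:ℝ) - 1))) ∧
    Real.sqrt (((k:ℝ) - 3) * ((k:ℝ) + 3) / (((k:ℝ) - 1/2) * ((k:ℝ) + 1/2)))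
        * Real.cos (Real.pi / ((k:ℝ) - 1)) ≤ 1 - 9.1 / (k:ℝ)^2 := by
  constructor
  · intro x hzero
    by_contra hcon
    push_neg at hcon
    obtain ⟨m, rfl⟩ : ∃ m, k = m + 51 := ⟨k - 51, by omega⟩
    have hx : Real.sqrt ((((m:ℝ)+51) - 3) * (((m:ℝ)+51) + 3) / ((((m:ℝ)+51) - 1/2) * (((m:ℝ)+51) + 1/2)))
            * Real.cos (Real.pi / (((m:ℝ)+51) - 1)) < x := by
      push_cast at hcon
      convert hcon using 4 <;> push_cast <;> ring
    have hpos := geg_pos m x hx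
    have hidx : m + 51 - 2 = m + 49 := by omega
    rw [hidx] at hzero
    rw [hzero] at hpos
    exact lt_irrefl 0 hpos
  · exact part2 (k:ℝ) (by exact_mod_cast hk)
end

section
/- Let g : [-1,1] → ℝ be nonnegative and integrable with ∫_{-1}^{1} g = 1 and ∫_{-1}^{1} x g = 0, and let k ≥ 6 with λ_k = k(k+3). Assume a₊ = ∫_{0}^{1}(1-x²)g ≤ 5/λ_k. Suppose F : [0,1] → ℝ satisfies F(x) ≤ 0.11 for 0 ≤ x ≤ 1 - 10/λ_k and F(x) ≤ 1 - (λ_k/10)(0.89)(1-x) for 1 - 10/λ_k ≤ x ≤ 1, and F ≥ -0.081 on [0,1]. Then -0.081·a₊ ≤ ∫_{0}^{1}(1-x²) F(x) g(x) dx ≤ a₊ - (λ_k/10)·0.89·a₊². -/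
open MeasureTheory

private lemma stmt_18_cs (P Q B : ℝ) (key : ∀ s : ℝ, 0 ≤ P * (s * s) + (-2 * B) * s + Q) :
    B ^ 2 ≤ P * Q := by
  have hd := discrim_le_zero key
  rw [discrim] at hd
  nlinarith [hd]

private lemma stmt_18_arith (lam A B aplus : ℝ) (hlampos : 0 < lam) (hA0 : 0 ≤ A) (hB0 : 0 ≤ B)
    (hap : aplus = A + B) (hla : aplus * lam ≤ 5) :
    0.11 * A + (B - (lam / 10) * 0.89 * B ^ 2) ≤ aplus - (lam / 10) * 0.89 * aplus ^ 2 := by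
  rw [hap] at hla ⊢
  have h5a : 0 ≤ 5 - (A + B) * lam := by linarith
  have h5b : 0 ≤ 5 - B * lam := by nlinarith [mul_nonneg hA0 hlampos.le]
  nlinarith [mul_nonneg hA0 h5a, mul_nonneg hA0 h5b]

set_option maxHeartbeats 1000000 in
theorem stmt_18 (g F : ℝ → ℝ) (hg : ∀ x ∈ Set.Icc (-1:ℝ) 1, 0 ≤ g x)
    (hgi : IntervalIntegrable g volume (-1) 1)
    (hmass : ∫ x in (-1:ℝ)..1, g x = 1)
    (hmean : ∫ x in (-1:ℝ)..1, x * g x = 0)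
    (k : ℕ) (hk : 6 ≤ k) (lam : ℝ) (hlam : lam = k * (k + 3))
    (aplus : ℝ) (haplus : aplus = ∫ x in (0:ℝ)..1, (1 - x^2) * g x)
    (hasmall : aplus ≤ 5 / lam)
    (hF1 : ∀ x, 0 ≤ x → x ≤ 1 - 10 / lam → F x ≤ 0.11)
    (hF2 : ∀ x, 1 - 10 / lam ≤ x → x ≤ 1 → F x ≤ 1 - (lam / 10) * 0.89 * (1 - x))
    (hF3 : ∀ x ∈ Set.Icc (0:ℝ) 1, -0.081 ≤ F x)
    (hFg : IntervalIntegrable (fun x => (1 - x^2) * F x * g x) volume 0 1) :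
    -0.081 * aplus ≤ (∫ x in (0:ℝ)..1, (1 - x^2) * F x * g x) ∧
      (∫ x in (0:ℝ)..1, (1 - x^2) * F x * g x) ≤ aplus - (lam / 10) * 0.89 * aplus^2 := by
  have hk6 : (6:ℝ) ≤ (k:ℝ) := by exact_mod_cast hk
  have hlam54 : (54:ℝ) ≤ lam := by nlinarith [hlam]
  have hlampos : (0:ℝ) < lam := by linarith
  obtain ⟨t, ht_def⟩ : ∃ t : ℝ, 1 - 10 / lam = t := ⟨_, rfl⟩
  rw [ht_def] at hF1 hF2
  have hdiv : (0:ℝ) < 10 / lam := by positivity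
  have hdiv' : 10 / lam ≤ 10 / 54 := by
    apply div_le_div_of_nonneg_left (by norm_num) (by norm_num) hlam54
  have ht0 : (0:ℝ) ≤ t := by rw [← ht_def]; linarith
  have ht1 : t ≤ 1 := by rw [← ht_def]; linarith
  -- subset facts
  have hsub01 : Set.uIcc (0:ℝ) 1 ⊆ Set.uIcc (-1:ℝ) 1 := by
    rw [Set.uIcc_of_le (by norm_num : (0:ℝ) ≤ 1), Set.uIcc_of_le (by norm_num : (-1:ℝ) ≤ 1)]
    exact Set.Icc_subset_Icc (by norm_num) le_rfl
  have hsub0t : Set.uIcc (0:ℝ) t ⊆ Set.uIcc (0:ℝ) 1 := by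
    rw [Set.uIcc_of_le ht0, Set.uIcc_of_le (by norm_num : (0:ℝ) ≤ 1)]
    exact Set.Icc_subset_Icc le_rfl ht1
  have hsubt1 : Set.uIcc t 1 ⊆ Set.uIcc (0:ℝ) 1 := by
    rw [Set.uIcc_of_le ht1, Set.uIcc_of_le (by norm_num : (0:ℝ) ≤ 1)]
    exact Set.Icc_subset_Icc ht0 le_rfl
  have hInc : Set.Icc (0:ℝ) 1 ⊆ Set.Icc (-1:ℝ) 1 := Set.Icc_subset_Icc (by norm_num) le_rfl
  -- integrability of g on subintervals
  have hgi01 : IntervalIntegrable g volume 0 1 := hgi.mono_set hsub01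
  have hgit1 : IntervalIntegrable g volume t 1 := hgi01.mono_set hsubt1
  -- integrability of polynomial multiples
  have hc1 : Continuous (fun x : ℝ => 1 - x^2) := continuous_const.sub (continuous_pow 2)
  have hc2 : Continuous (fun x : ℝ => 1 + x) := continuous_const.add continuous_id
  have hc3 : Continuous (fun x : ℝ => (1 - x) * (1 - x^2)) :=
    (continuous_const.sub continuous_id).mul (continuous_const.sub (continuous_pow 2))
  have hi1 : IntervalIntegrable (fun x => (1 - x^2) * g x) volume 0 1 :=
    hgi01.continuousOn_mul hc1.continuousOn
  have hi1a : IntervalIntegrable (fun x => (1 - x^2) * g x) volume 0 t :=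
    hi1.mono_set hsub0t
  have hi1b : IntervalIntegrable (fun x => (1 - x^2) * g x) volume t 1 :=
    hi1.mono_set hsubt1
  have hi2 : IntervalIntegrable (fun x => (1 + x) * g x) volume t 1 :=
    hgit1.continuousOn_mul hc2.continuousOn
  have hi2' : IntervalIntegrable (fun x => (1 + x) * g x) volume (-1) 1 :=
    hgi.continuousOn_mul hc2.continuousOn
  have hi3 : IntervalIntegrable (fun x => (1 - x) * (1 - x^2) * g x) volume t 1 :=
    hgit1.continuousOn_mul hc3.continuousOn
  have hixg : IntervalIntegrable (fun x => x * g x) volume (-1) 1 :=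
    hgi.continuousOn_mul continuous_id.continuousOn
  have hFg1 : IntervalIntegrable (fun x => (1 - x^2) * F x * g x) volume 0 t :=
    hFg.mono_set hsub0t
  have hFg2 : IntervalIntegrable (fun x => (1 - x^2) * F x * g x) volume t 1 :=
    hFg.mono_set hsubt1
  -- key quantities (opaque names)
  obtain ⟨A, hA_def⟩ : ∃ A : ℝ, (∫ x in (0:ℝ)..t, (1 - x^2) * g x) = A := ⟨_, rfl⟩
  obtain ⟨B, hB_def⟩ : ∃ B : ℝ, (∫ x in t..1, (1 - x^2) * g x) = B := ⟨_, rfl⟩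
  obtain ⟨P, hP_def⟩ : ∃ P : ℝ, (∫ x in t..1, (1 + x) * g x) = P := ⟨_, rfl⟩
  obtain ⟨Q, hQ_def⟩ : ∃ Q : ℝ, (∫ x in t..1, (1 - x) * (1 - x^2) * g x) = Q := ⟨_, rfl⟩
  have haplusAB : aplus = A + B := by
    rw [haplus, ← hA_def, ← hB_def,
      intervalIntegral.integral_add_adjacent_intervals hi1a hi1b]
  have hA0 : 0 ≤ A := by
    rw [← hA_def]
    apply intervalIntegral.integral_nonneg ht0
    intro x hx
    have hx' : x ∈ Set.Icc (-1:ℝ) 1 := ⟨by linarith [hx.1], le_trans hx.2 ht1⟩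
    have h1 : 0 ≤ 1 - x^2 := by nlinarith [hx'.1, hx'.2]
    exact mul_nonneg h1 (hg x hx')
  have hB0 : 0 ≤ B := by
    rw [← hB_def]
    apply intervalIntegral.integral_nonneg ht1
    intro x hx
    have hx' : x ∈ Set.Icc (-1:ℝ) 1 := ⟨by linarith [hx.1], hx.2⟩
    have h1 : 0 ≤ 1 - x^2 := by nlinarith [hx'.1, hx'.2]
    exact mul_nonneg h1 (hg x hx')
  have hQ0 : 0 ≤ Q := by
    rw [← hQ_def]
    apply intervalIntegral.integral_nonneg ht1
    intro x hx
    have hx' : x ∈ Set.Icc (-1:ℝ) 1 := ⟨by linarith [hx.1], hx.2⟩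
    have h1 : 0 ≤ 1 - x^2 := by nlinarith [hx'.1, hx'.2]
    exact mul_nonneg (mul_nonneg (by linarith [hx.2]) h1) (hg x hx')
  -- P ≤ 1
  have htot : (∫ x in (-1:ℝ)..1, (1 + x) * g x) = 1 := by
    have he : (fun x : ℝ => (1 + x) * g x) = fun x => g x + x * g x := by
      funext x; ring
    rw [he, intervalIntegral.integral_add hgi hixg, hmass, hmean]; norm_num
  have hae : (0 : ℝ → ℝ) ≤ᵐ[volume.restrict (Set.Ioc (-1:ℝ) 1)]
      (fun x => (1 + x) * g x) := by
    refine (ae_restrict_iff' measurableSet_Ioc).mpr (Filter.Eventually.of_forall ?_)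
    intro x hx
    have hx' : x ∈ Set.Icc (-1:ℝ) 1 := ⟨le_of_lt hx.1, hx.2⟩
    have h1 := hg x hx'
    simp only [Pi.zero_apply]
    have h2 : 0 ≤ 1 + x := by linarith [hx'.1]
    exact mul_nonneg h2 h1
  have hneg1t : (-1:ℝ) ≤ t := by linarith
  have hP1 : P ≤ 1 := by
    have h := intervalIntegral.integral_mono_interval (a := t) (b := 1)
      hneg1t ht1 le_rfl hae hi2'
    rw [hP_def, htot] at h
    exact h
  -- Cauchy–Schwarz: B^2 ≤ P * Q
  have key : ∀ s : ℝ, 0 ≤ P * (s * s) + (-2 * B) * s + Q := by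
    intro s
    have heq : P * (s * s) + (-2 * B) * s + Q
        = ∫ x in t..1, (1 + x) * (s - (1 - x))^2 * g x := by
      have e1 : (∫ x in t..1, (1 + x) * (s - (1 - x))^2 * g x)
          = ∫ x in t..1, ((s * s) * ((1 + x) * g x) + ((-2 * s) * ((1 - x^2) * g x)
              + (1 - x) * (1 - x^2) * g x)) := by
        apply intervalIntegral.integral_congr
        intro x _
        ring
      rw [e1, intervalIntegral.integral_add (hi2.const_mul (s*s))
            ((hi1b.const_mul ((-2)*s)).add hi3),
          intervalIntegral.integral_add (hi1b.const_mul ((-2)*s)) hi3,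
          intervalIntegral.integral_const_mul, intervalIntegral.integral_const_mul,
          hP_def, hB_def, hQ_def]
      ring
    rw [heq]
    apply intervalIntegral.integral_nonneg ht1
    intro x hx
    have hx' : x ∈ Set.Icc (-1:ℝ) 1 := ⟨by linarith [hx.1], hx.2⟩
    have h1 := hg x hx'
    have h2 : (0:ℝ) ≤ 1 + x := by linarith [hx'.1]
    positivity
  have hCS : B^2 ≤ P * Q := stmt_18_cs P Q B key
  have hQB : B^2 ≤ Q := by nlinarith [hCS, hQ0, hP1]
  -- split the main integral
  have hsplit : (∫ x in (0:ℝ)..1, (1 - x^2) * F x * g x)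
      = (∫ x in (0:ℝ)..t, (1 - x^2) * F x * g x)
        + ∫ x in t..1, (1 - x^2) * F x * g x := by
    rw [intervalIntegral.integral_add_adjacent_intervals hFg1 hFg2]
  -- lower bound
  have hlow : -0.081 * aplus ≤ ∫ x in (0:ℝ)..1, (1 - x^2) * F x * g x := by
    have hmono : (∫ x in (0:ℝ)..1, (-0.081 : ℝ) * ((1 - x^2) * g x))
        ≤ ∫ x in (0:ℝ)..1, (1 - x^2) * F x * g x := by
      apply intervalIntegral.integral_mono_on (by norm_num) (hi1.const_mul _) hFg
      intro x hx
      have hnn : 0 ≤ (1 - x^2) * g x := by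
        have h1 := hg x (hInc hx)
        have h2 : 0 ≤ 1 - x^2 := by nlinarith [hx.1, hx.2]
        exact mul_nonneg h2 h1
      have hFx := hF3 x hx
      calc (-0.081 : ℝ) * ((1 - x^2) * g x) ≤ F x * ((1 - x^2) * g x) :=
            mul_le_mul_of_nonneg_right hFx hnn
        _ = (1 - x^2) * F x * g x := by ring
    rw [intervalIntegral.integral_const_mul, ← haplus] at hmono
    linarith
  refine ⟨hlow, ?_⟩
  -- region I bound
  have hI1 : (∫ x in (0:ℝ)..t, (1 - x^2) * F x * g x) ≤ 0.11 * A := by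
    have hmono : (∫ x in (0:ℝ)..t, (1 - x^2) * F x * g x)
        ≤ ∫ x in (0:ℝ)..t, (0.11 : ℝ) * ((1 - x^2) * g x) := by
      apply intervalIntegral.integral_mono_on ht0 hFg1 (hi1a.const_mul _)
      intro x hx
      have hx1 : x ≤ 1 := le_trans hx.2 ht1
      have hnn : 0 ≤ (1 - x^2) * g x := by
        have h1 := hg x ⟨by linarith [hx.1], hx1⟩
        have h2 : 0 ≤ 1 - x^2 := by nlinarith [hx.1]
        exact mul_nonneg h2 h1
      have hFx : F x ≤ 0.11 := hF1 x hx.1 hx.2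
      calc (1 - x^2) * F x * g x = F x * ((1 - x^2) * g x) := by ring
        _ ≤ 0.11 * ((1 - x^2) * g x) := mul_le_mul_of_nonneg_right hFx hnn
    rw [intervalIntegral.integral_const_mul, hA_def] at hmono
    exact hmono
  -- region II bound
  have hI2 : (∫ x in t..1, (1 - x^2) * F x * g x) ≤ B - (lam / 10) * 0.89 * Q := by
    have hmono : (∫ x in t..1, (1 - x^2) * F x * g x)
        ≤ ∫ x in t..1, ((1 - x^2) * g x
            - (lam / 10) * 0.89 * ((1 - x) * (1 - x^2) * g x)) := by
      apply intervalIntegral.integral_mono_on ht1 hFg2 (hi1b.sub (hi3.const_mul _))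
      intro x hx
      have hnn : 0 ≤ (1 - x^2) * g x := by
        have h1 := hg x ⟨by linarith [hx.1, ht0], hx.2⟩
        have h2 : 0 ≤ 1 - x^2 := by nlinarith [hx.1, hx.2, ht0]
        exact mul_nonneg h2 h1
      have hFx : F x ≤ 1 - (lam / 10) * 0.89 * (1 - x) := hF2 x hx.1 hx.2
      calc (1 - x^2) * F x * g x = F x * ((1 - x^2) * g x) := by ring
        _ ≤ (1 - (lam / 10) * 0.89 * (1 - x)) * ((1 - x^2) * g x) :=
            mul_le_mul_of_nonneg_right hFx hnn
        _ = (1 - x^2) * g x - (lam / 10) * 0.89 * ((1 - x) * (1 - x^2) * g x) := by ring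
    rw [intervalIntegral.integral_sub hi1b (hi3.const_mul _),
        intervalIntegral.integral_const_mul, hB_def, hQ_def] at hmono
    exact hmono
  -- final arithmetic
  have hla : aplus * lam ≤ 5 := (le_div_iff₀ hlampos).mp hasmall
  have hc : (0:ℝ) ≤ (lam / 10) * 0.89 := by positivity
  have hQ' : (lam / 10) * 0.89 * B^2 ≤ (lam / 10) * 0.89 * Q :=
    mul_le_mul_of_nonneg_left hQB hc
  have hfinal := stmt_18_arith lam A B aplus hlampos hA0 hB0 haplusAB hla
  rw [hsplit]
  linarith [hI1, hI2, hQ', hfinal]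
end
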